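/- arXiv:2212.03484 — 2 statements merged into one kernel-verified Lean document; each statement's English description precedes it below -/
import Mathlib

section
/- Let q be a prime power, m ≥ 1, and let D = {d₁,…,d_n} be a set of n elements of the finite field F_{q^m}. Define the linear code C_D = {(Tr(x d₁), Tr(x d₂), …, Tr(x d_n)) : x ∈ F_{q^m}} ⊆ F_q^n, where Tr is the field trace from F_{q^m} to F_q. If dim_{F_q} C_D = m, then for every r with 1 ≤ r ≤ m, the r-th generalized Hamming weight satisfies d_r(C_D) = n − max{ |D ∩ H^⊥| : H an r-dimensional F_q-subspace of F_{q^m} }, where H^⊥ = {x ∈ F_{q^m} : Tr(xy) = 0 for all y ∈ H}. -/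
/-- The `r`-th generalized Hamming weight of a linear code `C ⊆ K^ι`: the minimum support size
of an `r`-dimensional subcode. -/
noncomputable def ghw {K : Type*} [Field K] {ι : Type*}
    (C : Submodule K (ι → K)) (r : ℕ) : ℕ :=
  sInf {n | ∃ H : Submodule K (ι → K), H ≤ C ∧ Module.finrank K ↥H = r ∧
    n = Set.ncard {i : ι | ∃ c ∈ H, c i ≠ 0}}

/-- The linear code `{(Tr(x·d))_{d ∈ D} : x ∈ L} ⊆ K^D` obtained from the defining set `D ⊆ L`. -/
noncomputable def traceCode (K L : Type*) [Field K] [Field L] [Algebra K L]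
    (D : Set L) : Submodule K (D → K) :=
  LinearMap.range (LinearMap.pi fun d : D =>
    (Algebra.trace K L) ∘ₗ (LinearMap.mulRight K (d : L)))

/-- For a trace code of full dimension `m`, the `r`-th generalized Hamming weight equals
`n − max {|D ∩ H^⊥|}` over all `r`-dimensional subspaces `H` of `L = F_{q^m}`. -/
theorem ghw_traceCode_eq (q m n : ℕ) (hq : ∃ p e : ℕ, p.Prime ∧ 0 < e ∧ q = p ^ e)
    (hm : 1 ≤ m)
    (K L : Type) [Field K] [Fintype K] [Field L] [Fintype L] [Algebra K L]
    (hcard : Fintype.card K = q) (hcardL : Fintype.card L = q ^ m)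
    (hrank : Module.finrank K L = m)
    (D : Finset L) (hn : D.card = n)
    (hdim : Module.finrank K ↥(traceCode K L (↑D : Set L)) = m) :
    ∀ r : ℕ, 1 ≤ r → r ≤ m →
      ghw (traceCode K L (↑D : Set L)) r =
        n - sSup {k : ℕ | ∃ H : Submodule K L, Module.finrank K ↥H = r ∧
          k = Set.ncard ((↑D : Set L) ∩
            {x : L | ∀ y ∈ H, Algebra.trace K L (x * y) = 0})} := by
  intro r hr1 hrm
  classical
  set T : L →ₗ[K] ((↑D : Set L) → K) :=
    LinearMap.pi (fun d : (↑D : Set L) => (Algebra.trace K L) ∘ₗ (LinearMap.mulRight K (d : L)))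
    with hT
  have hC : traceCode K L (↑D : Set L) = LinearMap.range T := rfl
  have hfin : Module.Finite K L := Module.Finite.of_finite
  -- injectivity of T
  have hinj : Function.Injective T := by
    rw [← LinearMap.ker_eq_bot]
    have h1 := LinearMap.finrank_range_add_finrank_ker T
    rw [← hC, hdim, hrank] at h1
    have h0 : Module.finrank K ↥(LinearMap.ker T) = 0 := by omega
    exact (Submodule.finrank_eq_zero).mp h0
  -- the counting lemma
  have key : ∀ H' : Submodule K L,
      Set.ncard {i : (↑D : Set L) | ∃ c ∈ Submodule.map T H', c i ≠ 0}
        = n - Set.ncard ((↑D : Set L) ∩ {x : L | ∀ y ∈ H', Algebra.trace K L (x * y) = 0}) ∧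
      Set.ncard ((↑D : Set L) ∩ {x : L | ∀ y ∈ H', Algebra.trace K L (x * y) = 0}) ≤ n := by
    intro H'
    set perp : Set L := {x : L | ∀ y ∈ H', Algebra.trace K L (x * y) = 0} with hperp
    set S : Set (↑D : Set L) := {i | ∃ c ∈ Submodule.map T H', c i ≠ 0} with hS
    have hScompl : Sᶜ = (Subtype.val ⁻¹' perp : Set (↑D : Set L)) := by
      ext i
      simp only [Set.mem_compl_iff, hS, Set.mem_setOf_eq, Set.mem_preimage, hperp]
      push_neg
      constructor
      · intro h y hy
        have := h (T y) ⟨y, hy, rfl⟩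
        simpa [T, mul_comm] using this
      · rintro h c ⟨y, hy, rfl⟩
        simpa [T, mul_comm] using h y hy
    have himg : Subtype.val '' (Sᶜ) = (↑D : Set L) ∩ perp := by
      rw [hScompl]; exact Subtype.image_preimage_coe _ _
    have hcount : Set.ncard (Sᶜ) = Set.ncard ((↑D : Set L) ∩ perp) := by
      rw [← himg, Set.ncard_image_of_injective _ Subtype.val_injective]
    have htot : S.ncard + (Sᶜ).ncard = n := by
      rw [Set.ncard_add_ncard_compl, Nat.card_coe_set_eq, Set.ncard_coe_finset, hn]
    constructor
    · omega
    · omega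
  -- dimension transfer
  have hfinrank_map : ∀ H' : Submodule K L,
      Module.finrank K ↥(Submodule.map T H') = Module.finrank K ↥H' :=
    fun H' => (LinearEquiv.finrank_eq (Submodule.equivMapOfInjective T hinj H')).symm
  -- existence of an r-dimensional subspace
  obtain ⟨H₀, hH₀⟩ : ∃ H : Submodule K L, Module.finrank K ↥H = r := by
    have b := Module.finBasisOfFinrankEq K L hrank
    refine ⟨Submodule.span K (Set.range (b ∘ Fin.castLE hrm)), ?_⟩
    rw [finrank_span_eq_card (b.linearIndependent.comp _ (Fin.castLE_injective hrm))]
    simp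
  set B : Set ℕ := {k : ℕ | ∃ H : Submodule K L, Module.finrank K ↥H = r ∧
      k = Set.ncard ((↑D : Set L) ∩ {x : L | ∀ y ∈ H, Algebra.trace K L (x * y) = 0})} with hB
  set A : Set ℕ := {a | ∃ H : Submodule K (((↑D : Set L)) → K), H ≤ traceCode K L (↑D : Set L) ∧
      Module.finrank K ↥H = r ∧ a = Set.ncard {i : (↑D : Set L) | ∃ c ∈ H, c i ≠ 0}} with hA
  have hghw : ghw (traceCode K L (↑D : Set L)) r = sInf A := rfl
  have hBne : B.Nonempty := ⟨_, H₀, hH₀, rfl⟩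
  have hfwd : ∀ k ∈ B, (n - k) ∈ A ∧ k ≤ n := by
    rintro k ⟨H', hH', rfl⟩
    obtain ⟨h1, h2⟩ := key H'
    refine ⟨⟨Submodule.map T H', ?_, ?_, h1.symm⟩, h2⟩
    · rw [hC]; exact LinearMap.map_le_range
    · rw [hfinrank_map]; exact hH'
  have hbwd : ∀ a ∈ A, ∃ k ∈ B, a = n - k := by
    rintro a ⟨H, hHle, hHr, rfl⟩
    rw [hC] at hHle
    have hmap : Submodule.map T (Submodule.comap T H) = H := Submodule.map_comap_eq_self hHle
    refine ⟨_, ⟨Submodule.comap T H, ?_, rfl⟩, ?_⟩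
    · rw [← hfinrank_map (Submodule.comap T H), hmap]; exact hHr
    · rw [← (key (Submodule.comap T H)).1, hmap]
  have hBbdd : BddAbove B := ⟨n, fun k hk => (hfwd k hk).2⟩
  have hsmem : sSup B ∈ B := Nat.sSup_mem hBne hBbdd
  rw [hghw]
  apply le_antisymm
  · exact Nat.sInf_le (hfwd _ hsmem).1
  · refine le_csInf ⟨_, (hfwd _ hsmem).1⟩ ?_
    rintro a ha
    obtain ⟨k, hk, rfl⟩ := hbwd a ha
    exact Nat.sub_le_sub_left (le_csSup hBbdd hk) n
end

section
/- Let q be a power of 2, let m ≥ 4 be an even integer, and let f be a non-degenerate quadratic form on F_{q^m} over F_q of Type I. Then for every integer r with 2 ≤ r ≤ m/2, there exists an (m−r)-dimensional F_q-subspace W of F_{q^m} such that the restriction of f to W has rank m−2r+2 and is of Type II; consequently, for every a ∈ F_q with a ≠ 0, |{x ∈ W : f(x) = a}| = q^{m−r−1} + q^{(m−4)/2}. -/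
noncomputable def qfKer {K V : Type*} [Field K] [AddCommGroup V] [Module K V]
    (f : QuadraticForm K V) : Submodule K V where
  carrier := {x | ∀ y, f (x + y) = f y}
  zero_mem' := by intro y; rw [zero_add]
  add_mem' := by
    intro a b ha hb y
    rw [add_assoc, ha, hb]
  smul_mem' := by
    intro c x hx y
    have h0 : f x = 0 := by simpa using hx 0
    have hp : ∀ z, QuadraticMap.polar (⇑f) x z = 0 := by
      intro z
      simp [QuadraticMap.polar, hx z, h0]
    have h1 : f (c • x) = 0 := by
      rw [QuadraticMap.map_smul, h0]
      simp
    have hps : QuadraticMap.polar (⇑f) (c • x) y = 0 := by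
      rw [QuadraticMap.polar_smul_left, hp y, smul_zero]
    have h2 : f (c • x + y) - f (c • x) - f y = 0 := hps
    show f (c • x + y) = f y
    linear_combination h2 + h1

/-- Extend a coordinate vector `c : Fin d → K` by zero to all of `ℕ`. -/
def extc {K : Type*} [Zero K] {d : ℕ} (c : Fin d → K) (i : ℕ) : K :=
  if h : i < d then c ⟨i, h⟩ else 0

/-- A quadratic form of rank `t` on a `d`-dimensional space is of Type I if in some basis it is
`x₁x₂ + x₃x₄ + ⋯ + x_{t−1}x_t` (`t` even). -/
def IsTypeI (K V : Type*) [Field K] [AddCommGroup V] [Module K V] (d t : ℕ)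
    (f : QuadraticForm K V) : Prop :=
  ∃ b : Module.Basis (Fin d) K V, ∀ c : Fin d → K,
    f (∑ i, c i • b i) =
      ∑ j ∈ Finset.range (t / 2), extc c (2 * j) * extc c (2 * j + 1)

/-- A quadratic form of rank `t` on a `d`-dimensional space is of Type II if in some basis it is
`x₁x₂ + ⋯ + x_{t−3}x_{t−2} + αx_{t−1}² + x_{t−1}x_t + αx_t²` with `α` not of the form `u² + u`
(`t` even). -/
def IsTypeII (K V : Type*) [Field K] [AddCommGroup V] [Module K V] (d t : ℕ)
    (f : QuadraticForm K V) : Prop :=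
  ∃ α : K, (∀ u : K, α ≠ u ^ 2 + u) ∧
    ∃ b : Module.Basis (Fin d) K V, ∀ c : Fin d → K,
      f (∑ i, c i • b i) =
        (∑ j ∈ Finset.range (t / 2 - 1), extc c (2 * j) * extc c (2 * j + 1))
          + α * extc c (t - 2) ^ 2 + extc c (t - 2) * extc c (t - 1)
          + α * extc c (t - 1) ^ 2

/-!
In a Type I basis `f` is `x₀x₁ + x₂x₃ + ⋯ + x_{m-2}x_{m-1}`. Write `m = 2(s + k + 2)`, `r = k + 2`
and pick `α` outside the image of `u ↦ u² + u` (that map identifies `0` and `1`, so it is not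
surjective). Let `W` be the image of `(y, x, x', z) ↦ (y, x, αx + x', x', αx', z₁, 0, …, z_k, 0)`
with `y ∈ K^(2s)`, `z ∈ K^k`: on the middle two hyperbolic pairs `f` becomes the anisotropic
form `αx² + xx' + αx'²`, and the `z`-part is a `k`-dimensional radical, so `f|W` is the Type II
form of rank `2s + 2`.

Every element is a square in characteristic `2`, so by scaling the anisotropic plane takes every
nonzero value equally often; its only zero is the origin, so that is `q + 1` times. The equation
`xy = t` has `q - 1 + q·[t = 0]` solutions.
Splitting off one hyperbolic pair at a time gives `q^(2s+k+1) + q^(s+k)` points of `W` with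
`f = a ≠ 0`.
-/

open Finset Module

section Coordinates

variable {K : Type*}

lemma extc_of_lt [Zero K] {d : ℕ} (c : Fin d → K) {n : ℕ} (h : n < d) : extc c n = c ⟨n, h⟩ :=
  dif_pos h

lemma extc_add [AddZeroClass K] {d : ℕ} (c c' : Fin d → K) :
    extc (c + c') = extc c + extc c' := by
  funext n; simp only [extc, Pi.add_apply]; split_ifs <;> simp

lemma extc_smul [Semiring K] {d : ℕ} (a : K) (c : Fin d → K) : extc (a • c) = a • extc c := by
  funext n; simp only [extc, Pi.smul_apply]; split_ifs <;> simp

lemma extc_single [Zero K] [One K] {d : ℕ} (i : Fin d) :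
    extc (Pi.single i (1 : K)) = Pi.single (i : ℕ) 1 := by
  funext n
  unfold extc
  split_ifs with h
  · simp only [Pi.single_apply, Fin.ext_iff]
  · rw [Pi.single_eq_of_ne (by omega)]

variable (K) in
def extcLinearMap [Semiring K] (d : ℕ) : (Fin d → K) →ₗ[K] (ℕ → K) where
  toFun := extc
  map_add' := extc_add
  map_smul' := extc_smul

section Cons

variable [Zero K] {n : ℕ} (x y : K) (v : Fin n → K)

lemma extc_cons_cons_zero : extc (Fin.cons x (Fin.cons y v) : Fin (n + 2) → K) 0 = x := rfl

lemma extc_cons_cons_one : extc (Fin.cons x (Fin.cons y v) : Fin (n + 2) → K) 1 = y := rfl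

lemma extc_cons_cons_add_two :
    (fun p => extc (Fin.cons x (Fin.cons y v) : Fin (n + 2) → K) (p + 2)) = extc v := by
  funext p; simp only [extc, Nat.add_lt_add_iff_right]; split_ifs <;> rfl

end Cons

end Coordinates

section Pullback

variable {K V : Type*} [Field K] [AddCommGroup V] [Module K V]

lemma mem_qfKer {f : QuadraticForm K V} {x : V} : x ∈ qfKer f ↔ ∀ y, f (x + y) = f y :=
  Iff.rfl

lemma qfKer_comp_linearEquiv {V' : Type*} [AddCommGroup V'] [Module K V'] (f : QuadraticForm K V)
    (e : V' ≃ₗ[K] V) : qfKer (f.comp (e : V' →ₗ[K] V)) = (qfKer f).comap (e : V' →ₗ[K] V) := by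
  ext x
  simp only [Submodule.mem_comap, mem_qfKer, QuadraticMap.comp_apply, LinearEquiv.coe_coe,
    map_add]
  exact ⟨fun h z => by simpa using h (e.symm z), fun h y => h (e y)⟩

variable {ι : Type*} (f : QuadraticForm K V) {T : (ι → K) →ₗ[K] V} (hT : Function.Injective T)
include hT

lemma finrank_qfKer_comp_range_subtype :
    finrank K (qfKer (f.comp (LinearMap.range T).subtype)) = finrank K (qfKer (f.comp T)) := by
  let e := LinearEquiv.ofInjective T hT
  have he : f.comp T = (f.comp (LinearMap.range T).subtype).comp (e : _ →ₗ[K] _) := rfl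
  rw [he, qfKer_comp_linearEquiv, Submodule.comap_equiv_eq_map_symm, LinearEquiv.finrank_map_eq]

lemma exists_basis_range_comp_subtype_apply [Fintype ι] :
    ∃ b : Basis ι K (LinearMap.range T), ∀ c : ι → K,
      f.comp (LinearMap.range T).subtype (∑ i, c i • b i) = f (T c) := by
  let e := LinearEquiv.ofInjective T hT
  refine ⟨(Pi.basisFun K ι).map e, fun c => ?_⟩
  have := ((Pi.basisFun K ι).map e).sum_repr (e c)
  simp only [Basis.map_repr, LinearEquiv.trans_apply, LinearEquiv.symm_apply_apply,
    Pi.basisFun_repr] at this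
  rw [this]
  rfl

lemma ncard_range_inter_fiber (a : K) :
    {x | x ∈ LinearMap.range T ∧ f x = a}.ncard = Nat.card {c // f (T c) = a} := by
  have : {x | x ∈ LinearMap.range T ∧ f x = a} = T '' {c | f (T c) = a} := by
    ext x
    simp only [Set.mem_ofPred_eq, Set.mem_image, LinearMap.mem_range]
    constructor
    · rintro ⟨⟨c, rfl⟩, h⟩; exact ⟨c, h, rfl⟩
    · rintro ⟨c, h, rfl⟩; exact ⟨⟨c, rfl⟩, h⟩
  rw [this, Set.ncard_image_of_injective _ hT, ← Nat.card_coe_set_eq]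
  rfl

end Pullback

lemma finrank_ker_funLeft_castLE (K : Type*) [Field K] {m d : ℕ} (h : m ≤ d) :
    finrank K (LinearMap.ker (LinearMap.funLeft K K (Fin.castLE h))) = d - m := by
  have hsurj := LinearMap.funLeft_surjective_of_injective K K _ (Fin.castLE_injective h)
  have := LinearMap.finrank_range_add_finrank_ker (LinearMap.funLeft K K (Fin.castLE h))
  rw [LinearMap.range_eq_top.mpr hsurj, finrank_top, finrank_fin_fun, finrank_fin_fun] at this
  omega

lemma Nat.card_subtype_prod_eq_sum {α β : Type*} [Finite α] [Fintype β] (P : α × β → Prop) :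
    Nat.card {p // P p} = ∑ b, Nat.card {a // P (a, b)} :=
  calc Nat.card {p // P p} = Nat.card {q : β × α // P (q.2, q.1)} :=
        Nat.card_congr ((Equiv.prodComm α β).subtypeEquiv fun _ => Iff.rfl)
    _ = ∑ b, Nat.card {a // P (a, b)} := by
      rw [Nat.card_congr (Equiv.subtypeProdEquivSigmaSubtype fun b a => P (a, b)), Nat.card_sigma]

lemma Nat.card_subtype_fin_cons_cons {K : Type*} [Fintype K] {n : ℕ}
    (P : (Fin (n + 2) → K) → Prop) :
    Nat.card {c // P c} =
      ∑ v : Fin n → K, Nat.card {p : K × K // P (Fin.cons p.1 (Fin.cons p.2 v))} := by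
  let e : (K × K) × (Fin n → K) ≃ (Fin (n + 2) → K) :=
    (Equiv.prodAssoc K K _).trans
      (((Equiv.refl K).prodCongr (Fin.consEquiv fun _ => K)).trans (Fin.consEquiv fun _ => K))
  rw [← Nat.card_congr (e.subtypeEquiv fun _ => Iff.rfl)]
  exact Nat.card_subtype_prod_eq_sum _

lemma card_mul_fiber {K : Type*} [Field K] [Fintype K] [DecidableEq K] (b : K) :
    Nat.card {p : K × K // p.1 * p.2 = b} =
      Fintype.card K - 1 + if b = 0 then Fintype.card K else 0 := by
  have hfiber : ∀ y ≠ 0, Nat.card {x : K // x * y = b} = 1 := fun y hy =>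
    Nat.card_eq_one_iff_exists.mpr
      ⟨⟨b / y, div_mul_cancel₀ b hy⟩, fun ⟨x, hx⟩ => Subtype.ext (eq_div_of_mul_eq hy hx)⟩
  have hzero : Nat.card {x : K // x * 0 = b} = if b = 0 then Fintype.card K else 0 := by
    split_ifs with hb <;> simp [hb, eq_comm]
  rw [Nat.card_subtype_prod_eq_sum, Fintype.sum_eq_add_sum_compl 0, hzero,
    sum_congr rfl fun y hy => hfiber y (by simpa using hy), sum_const, card_compl,
    card_singleton, smul_eq_mul, mul_one, add_comm]

section CharTwoField

variable {K : Type*} [Field K] [CharP K 2]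

lemma exists_forall_ne_sq_add_self [Finite K] : ∃ α : K, ∀ u : K, α ≠ u ^ 2 + u := by
  have hninj : ¬ Function.Injective (fun u : K => u ^ 2 + u) := fun h =>
    one_ne_zero (h (a₁ := 1) (a₂ := 0) (by simp [CharTwo.add_self_eq_zero]))
  obtain ⟨α, hα⟩ := not_forall.mp (mt Finite.injective_iff_surjective.mpr hninj)
  exact ⟨α, fun u h => hα ⟨u, h.symm⟩⟩

variable {α : K} (hα : ∀ u : K, α ≠ u ^ 2 + u)
include hα

lemma eq_zero_of_elliptic_eq_zero {x y : K} (h : α * x ^ 2 + x * y + α * y ^ 2 = 0) :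
    x = 0 ∧ y = 0 := by
  by_cases hxy : x + y = 0
  · obtain rfl := CharTwo.add_eq_zero.mp hxy
    have hx : x ^ 2 = 0 := by linear_combination h - α * x ^ 2 * CharTwo.two_eq_zero (R := K)
    simpa using hx
  · refine absurd ?_ (hα (y / (x + y)))
    field_simp
    linear_combination h + (α * x * y - x * y - y ^ 2) * CharTwo.two_eq_zero (R := K)

lemma card_elliptic_fiber [Fintype K] {a : K} (ha : a ≠ 0) :
    Nat.card {p : K × K // α * p.1 ^ 2 + p.1 * p.2 + α * p.2 ^ 2 = a} = Fintype.card K + 1 := by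
  classical
  set E : K × K → K := fun p => α * p.1 ^ 2 + p.1 * p.2 + α * p.2 ^ 2 with hE
  change Nat.card {p // E p = a} = _
  have hzero : Nat.card {p // E p = 0} = 1 :=
    Nat.card_eq_one_iff_exists.mpr ⟨⟨0, by simp [hE]⟩, fun ⟨p, hp⟩ => by
      obtain ⟨h1, h2⟩ := eq_zero_of_elliptic_eq_zero hα hp
      ext <;> simp [h1, h2]⟩
  have hscale : ∀ b ≠ 0, Nat.card {p // E p = b} = Nat.card {p // E p = a} := by
    intro b hb
    obtain ⟨t, ht⟩ := isSquare_of_charTwo' (b / a)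
    have ht0 : t ≠ 0 := by rintro rfl; simp_all
    have hb : b = t ^ 2 * a := by rw [← div_mul_cancel₀ b ha, ht, sq]
    refine (Nat.card_congr ((MulAction.toPerm (Units.mk0 t ht0)).subtypeEquiv fun p => ?_)).symm
    simp only [MulAction.toPerm_apply, Units.smul_mk0, hE, Prod.smul_fst, Prod.smul_snd,
      smul_eq_mul, hb]
    rw [← mul_right_inj' (pow_ne_zero 2 ht0)]
    ring_nf
  have htotal : ∑ b, Nat.card {p // E p = b} = Fintype.card K ^ 2 := by
    rw [← Nat.card_sigma, Nat.card_congr (Equiv.sigmaFiberEquiv E), Nat.card_prod,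
      Nat.card_eq_fintype_card, sq]
  rw [Fintype.sum_eq_add_sum_compl 0, hzero,
    sum_congr rfl fun b hb => hscale b (by simpa using hb), sum_const, card_compl,
    card_singleton, smul_eq_mul] at htotal
  obtain ⟨q, hq⟩ : ∃ q, Fintype.card K = q + 2 :=
    ⟨Fintype.card K - 2, by have := Fintype.one_lt_card (α := K); omega⟩
  rw [hq] at htotal ⊢
  have h : (q + 1) * Nat.card {p // E p = a} = (q + 1) * (q + 3) := by
    rw [show q + 2 - 1 = q + 1 by omega] at htotal; linarith
  exact Nat.eq_of_mul_eq_mul_left (Nat.succ_pos q) h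

end CharTwoField

section Polynomials

variable {K : Type*} [CommRing K]

/- The coordinate expressions of `IsTypeI` (rank `2n`) and of `IsTypeII` (rank `2s + 2`) are
`hyperbolicPoly n (extc c)` and `typeIIPoly α s (extc c)`. -/

def hyperbolicPoly (n : ℕ) (x : ℕ → K) : K :=
  ∑ j ∈ range n, x (2 * j) * x (2 * j + 1)

def hyperbolicPolar (n : ℕ) (x y : ℕ → K) : K :=
  ∑ j ∈ range n, (x (2 * j) * y (2 * j + 1) + x (2 * j + 1) * y (2 * j))

def typeIIPoly (α : K) (s : ℕ) (x : ℕ → K) : K :=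
  hyperbolicPoly s x + α * x (2 * s) ^ 2 + x (2 * s) * x (2 * s + 1) + α * x (2 * s + 1) ^ 2

lemma hyperbolicPoly_extc_restrict {n m : ℕ} (h : 2 * n ≤ m) (y : ℕ → K) :
    hyperbolicPoly n (extc fun p : Fin m => y p) = hyperbolicPoly n y :=
  sum_congr rfl fun j hj => by
    have := mem_range.mp hj
    rw [extc_of_lt _ (by omega), extc_of_lt _ (by omega)]

lemma typeIIPoly_zero (α : K) (x : ℕ → K) :
    typeIIPoly α 0 x = α * x 0 ^ 2 + x 0 * x 1 + α * x 1 ^ 2 := by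
  simp [typeIIPoly, hyperbolicPoly]

lemma typeIIPoly_succ (α : K) (s : ℕ) (x : ℕ → K) :
    typeIIPoly α (s + 1) x = x 0 * x 1 + typeIIPoly α s (fun p => x (p + 2)) := by
  simp only [typeIIPoly, hyperbolicPoly, sum_range_succ', Nat.mul_succ]
  ring_nf

lemma typeIIPoly_congr (α : K) (s : ℕ) {x y : ℕ → K} (h : ∀ p < 2 * s + 2, x p = y p) :
    typeIIPoly α s x = typeIIPoly α s y := by
  have hsum : hyperbolicPoly s x = hyperbolicPoly s y :=
    sum_congr rfl fun j hj => by
      have := mem_range.mp hj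
      rw [h (2 * j) (by omega), h (2 * j + 1) (by omega)]
  simp only [typeIIPoly, hsum, h (2 * s) (by omega), h (2 * s + 1) (by omega)]

lemma typeIIPoly_add [CharP K 2] (α : K) (s : ℕ) (x y : ℕ → K) :
    typeIIPoly α s (x + y) =
      typeIIPoly α s x + typeIIPoly α s y + hyperbolicPolar (s + 1) x y := by
  have hsum : hyperbolicPoly s (x + y) = hyperbolicPoly s x + hyperbolicPoly s y +
      hyperbolicPolar s x y := by
    simp only [hyperbolicPoly, hyperbolicPolar, ← sum_add_distrib, Pi.add_apply]
    exact sum_congr rfl fun j _ => by ring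
  simp only [typeIIPoly, hsum, hyperbolicPolar, sum_range_succ, Pi.add_apply]
  linear_combination (α * x (2 * s) * y (2 * s) + α * x (2 * s + 1) * y (2 * s + 1)) *
    CharTwo.two_eq_zero (R := K)

lemma hyperbolicPolar_single_odd {n j : ℕ} (hj : j < n) (x : ℕ → K) :
    hyperbolicPolar n x (Pi.single (2 * j + 1) 1) = x (2 * j) := by
  rw [hyperbolicPolar, sum_eq_single j]
  · simp
  · intro i _ hij
    rw [Pi.single_eq_of_ne (show 2 * i + 1 ≠ 2 * j + 1 by omega),
      Pi.single_eq_of_ne (show 2 * i ≠ 2 * j + 1 by omega)]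
    ring
  · simp [hj]

lemma hyperbolicPolar_single_even {n j : ℕ} (hj : j < n) (x : ℕ → K) :
    hyperbolicPolar n x (Pi.single (2 * j) 1) = x (2 * j + 1) := by
  rw [hyperbolicPolar, sum_eq_single j]
  · simp
  · intro i _ hij
    rw [Pi.single_eq_of_ne (show 2 * i + 1 ≠ 2 * j by omega),
      Pi.single_eq_of_ne (show 2 * i ≠ 2 * j by omega)]
    ring
  · simp [hj]

end Polynomials

theorem card_typeIIPoly_fiber {K : Type*} [Field K] [Fintype K] [CharP K 2] {α : K}
    (hα : ∀ u : K, α ≠ u ^ 2 + u) {a : K} (ha : a ≠ 0) (s : ℕ) :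
    ∀ n, 2 * s ≤ n → Nat.card {c : Fin (n + 2) → K // typeIIPoly α s (extc c) = a} =
      Fintype.card K ^ (n + 1) + Fintype.card K ^ (n - s) := by
  classical
  induction s with
  | zero =>
    intro n _
    rw [Nat.card_subtype_fin_cons_cons]
    simp only [typeIIPoly_zero, extc_cons_cons_zero, extc_cons_cons_one,
      card_elliptic_fiber hα ha, sum_const, card_univ, Fintype.card_fun, Fintype.card_fin,
      smul_eq_mul, Nat.sub_zero]
    ring
  | succ s ih =>
    intro n hn
    obtain ⟨n, rfl⟩ : ∃ m, n = m + 2 := ⟨n - 2, by omega⟩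
    have hfiber : ∀ t : K, Nat.card {p : K × K // p.1 * p.2 + t = a} =
        Fintype.card K - 1 + if t = a then Fintype.card K else 0 := fun t => by
      rw [Nat.card_congr (Equiv.subtypeEquivRight fun p => eq_sub_iff_add_eq.symm),
        card_mul_fiber, sub_eq_zero, eq_comm (a := a)]
    have hN := ih n (by omega)
    rw [Nat.card_eq_fintype_card] at hN
    rw [Nat.card_subtype_fin_cons_cons]
    simp only [typeIIPoly_succ, extc_cons_cons_zero, extc_cons_cons_one, extc_cons_cons_add_two,
      hfiber]
    rw [sum_add_distrib, Finset.sum_ite, sum_const_zero, add_zero, sum_const, sum_const,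
      ← Fintype.card_subtype, hN, card_univ, Fintype.card_fun, Fintype.card_fin, smul_eq_mul,
      smul_eq_mul]
    obtain ⟨q, hq⟩ : ∃ q, Fintype.card K = q + 1 :=
      ⟨_, (Nat.succ_pred_eq_of_pos Fintype.card_pos).symm⟩
    rw [hq, Nat.add_sub_cancel, show n + 2 - (s + 1) = n - s + 1 by omega]
    ring

theorem qfKer_eq_ker_funLeft_of_typeIIPoly {K : Type*} [Field K] [CharP K 2] {α : K} {s d : ℕ}
    (h : 2 * s + 2 ≤ d) {Q : QuadraticForm K (Fin d → K)}
    (hQ : ∀ c, Q c = typeIIPoly α s (extc c)) :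
    qfKer Q = LinearMap.ker (LinearMap.funLeft K K (Fin.castLE h)) := by
  ext c
  rw [LinearMap.mem_ker]
  constructor
  · intro hc
    have hpolar : ∀ y, hyperbolicPolar (s + 1) (extc c) (extc y) = 0 := fun y => by
      have hc0 : Q c = 0 := by simpa using hc 0
      rw [hQ] at hc0
      have := hc y
      rwa [hQ, hQ, extc_add, typeIIPoly_add, hc0, zero_add, add_eq_left] at this
    have hcoord : ∀ i < 2 * s + 2, extc c i = 0 := by
      intro i hi
      obtain ⟨j, rfl | rfl⟩ := Nat.even_or_odd' i
      · simpa [extc_single, hyperbolicPolar_single_odd (show j < s + 1 by omega)] using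
          hpolar (Pi.single ⟨2 * j + 1, by omega⟩ 1)
      · simpa [extc_single, hyperbolicPolar_single_even (show j < s + 1 by omega)] using
          hpolar (Pi.single ⟨2 * j, by omega⟩ 1)
    funext i
    have := hcoord i i.2
    rwa [extc_of_lt c (i.2.trans_le h)] at this
  · intro hc y
    rw [hQ, hQ]
    refine typeIIPoly_congr α s fun p hp => ?_
    rw [extc_add, Pi.add_apply, extc_of_lt c (hp.trans_le h)]
    simpa using congrFun hc ⟨p, hp⟩

section Embedding

variable {K : Type*} [CommRing K] (α : K) (s : ℕ)

/-- `x ↦ (x₀, …, x_{2s}, αx_{2s} + x_{2s+1}, x_{2s+1}, αx_{2s+1}, x_{2s+2}, 0, x_{2s+3}, 0, …)`.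
On the pairs `(2s, 2s+1)` and `(2s+2, 2s+3)` the hyperbolic polynomial becomes
`x_{2s}(αx_{2s} + x_{2s+1}) + αx_{2s+1}²`, the anisotropic part of the Type II polynomial. -/
def typeIIEmbed : (ℕ → K) →ₗ[K] (ℕ → K) where
  toFun x p :=
    if p ≤ 2 * s then x p
    else if p = 2 * s + 1 then α * x (2 * s) + x (2 * s + 1)
    else if p = 2 * s + 2 then x (2 * s + 1)
    else if p = 2 * s + 3 then α * x (2 * s + 1)
    else if Even p then x (p / 2 + s)
    else 0
  map_add' x y := by
    funext p; simp only [Pi.add_apply]; split_ifs <;> ring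
  map_smul' a x := by
    funext p; simp only [Pi.smul_apply, smul_eq_mul, RingHom.id_apply]; split_ifs <;> ring

lemma typeIIEmbed_apply (x : ℕ → K) (p : ℕ) :
    typeIIEmbed α s x p =
      if p ≤ 2 * s then x p
      else if p = 2 * s + 1 then α * x (2 * s) + x (2 * s + 1)
      else if p = 2 * s + 2 then x (2 * s + 1)
      else if p = 2 * s + 3 then α * x (2 * s + 1)
      else if Even p then x (p / 2 + s)
      else 0 :=
  rfl

-- `i + (i - 2s)` is `i`, `2s + 2` or `2i - 2s` according as `i ≤ 2s`, `i = 2s + 1` or `i > 2s + 1`.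
lemma typeIIEmbed_apply_add_sub (x : ℕ → K) (i : ℕ) :
    typeIIEmbed α s x (i + (i - 2 * s)) = x i := by
  rw [typeIIEmbed_apply]
  by_cases hi : i ≤ 2 * s
  · rw [if_pos (by omega), Nat.sub_eq_zero_of_le hi, add_zero]
  by_cases hi' : i = 2 * s + 1
  · subst hi'
    rw [if_neg (by omega), if_neg (by omega), if_pos (by omega)]
  rw [if_neg (by omega), if_neg (by omega), if_neg (by omega), if_neg (by omega),
    if_pos ⟨i - s, by omega⟩, show (i + (i - 2 * s)) / 2 + s = i by omega]

lemma hyperbolicPoly_typeIIEmbed {n : ℕ} (hn : s + 2 ≤ n) (x : ℕ → K) :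
    hyperbolicPoly n (typeIIEmbed α s x) = typeIIPoly α s x := by
  obtain ⟨t, rfl⟩ := Nat.exists_eq_add_of_le hn
  have hhead : ∀ p ≤ 2 * s, typeIIEmbed α s x p = x p := fun p hp => by
    rw [typeIIEmbed_apply, if_pos hp]
  have h₁ : typeIIEmbed α s x (2 * s + 1) = α * x (2 * s) + x (2 * s + 1) := by
    rw [typeIIEmbed_apply, if_neg (by omega), if_pos rfl]
  have h₂ : typeIIEmbed α s x (2 * s + 2) = x (2 * s + 1) := by
    rw [typeIIEmbed_apply, if_neg (by omega), if_neg (by omega), if_pos rfl]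
  have h₃ : typeIIEmbed α s x (2 * s + 3) = α * x (2 * s + 1) := by
    rw [typeIIEmbed_apply, if_neg (by omega), if_neg (by omega), if_neg (by omega), if_pos rfl]
  have htail : ∀ j, typeIIEmbed α s x (2 * (s + 2 + j) + 1) = 0 := fun j => by
    rw [typeIIEmbed_apply, if_neg (by omega), if_neg (by omega), if_neg (by omega),
      if_neg (by omega), if_neg (by simp [parity_simps])]
  rw [hyperbolicPoly, sum_range_add, sum_eq_zero (s := range t) fun j _ => by rw [htail, mul_zero],
    add_zero, sum_range_succ, sum_range_succ, typeIIPoly, hyperbolicPoly,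
    sum_congr rfl fun j hj => by
      rw [hhead _ (by simp at hj; omega), hhead _ (by simp at hj; omega)],
    hhead _ le_rfl, Nat.mul_succ, h₁, h₂, h₃]
  ring

variable (k : ℕ)

def typeIICoords : (Fin (2 * s + k + 2) → K) →ₗ[K] (Fin (2 * (s + k + 2)) → K) :=
  LinearMap.funLeft K K Fin.val ∘ₗ typeIIEmbed α s ∘ₗ extcLinearMap K _

lemma hyperbolicPoly_extc_typeIICoords (c : Fin (2 * s + k + 2) → K) :
    hyperbolicPoly (s + k + 2) (extc (typeIICoords α s k c)) = typeIIPoly α s (extc c) := by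
  change hyperbolicPoly _ (extc fun p : Fin _ => typeIIEmbed α s (extc c) p) = _
  rw [hyperbolicPoly_extc_restrict le_rfl, hyperbolicPoly_typeIIEmbed _ _ (by omega)]

lemma typeIICoords_injective : Function.Injective (typeIICoords α s k) := by
  intro c c' h
  funext i
  have key : ∀ c : Fin (2 * s + k + 2) → K,
      typeIICoords α s k c ⟨i + (i - 2 * s), by omega⟩ = c i := fun c => by
    change typeIIEmbed α s (extc c) (i + (i - 2 * s)) = c i
    rw [typeIIEmbed_apply_add_sub, extc_of_lt _ i.2]
  rw [← key c, ← key c', h]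

end Embedding

theorem exists_typeII_restriction_of_typeI {K V : Type*} [Field K] [Fintype K] [CharP K 2]
    [AddCommGroup V] [Module K V] {α : K} (hα : ∀ u : K, α ≠ u ^ 2 + u) (s k : ℕ)
    (f : QuadraticForm K V) (hI : IsTypeI K V (2 * (s + k + 2)) (2 * (s + k + 2)) f) :
    ∃ W : Submodule K V, finrank K W = 2 * s + k + 2 ∧
      finrank K W - finrank K (qfKer (f.comp W.subtype)) = 2 * s + 2 ∧
      IsTypeII K W (finrank K W) (2 * s + 2) (f.comp W.subtype) ∧
      ∀ a : K, a ≠ 0 → {x | x ∈ W ∧ f x = a}.ncard =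
        Fintype.card K ^ (2 * s + k + 1) + Fintype.card K ^ (s + k) := by
  obtain ⟨b, hb⟩ := hI
  let T := b.equivFun.symm.toLinearMap ∘ₗ typeIICoords α s k
  have hT : Function.Injective T := b.equivFun.symm.injective.comp (typeIICoords_injective α s k)
  have hfT : ∀ c, f (T c) = typeIIPoly α s (extc c) := fun c => by
    rw [← hyperbolicPoly_extc_typeIICoords α s k c, LinearMap.comp_apply, LinearEquiv.coe_coe,
      Basis.equivFun_symm_apply, hb, show 2 * (s + k + 2) / 2 = s + k + 2 by omega]
    rfl
  have hrange : finrank K (LinearMap.range T) = 2 * s + k + 2 := by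
    rw [LinearMap.finrank_range_of_inj hT, finrank_fin_fun]
  refine ⟨LinearMap.range T, hrange, ?_, ?_, fun a ha => ?_⟩
  · rw [finrank_qfKer_comp_range_subtype f hT,
      qfKer_eq_ker_funLeft_of_typeIIPoly (by omega) (Q := f.comp T) hfT,
      finrank_ker_funLeft_castLE, hrange]
    omega
  · obtain ⟨b', hb'⟩ := exists_basis_range_comp_subtype_apply f hT
    rw [hrange]
    refine ⟨α, hα, b', fun c => ?_⟩
    rw [hb', hfT, show (2 * s + 2) / 2 - 1 = s by omega, show 2 * s + 2 - 2 = 2 * s by omega,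
      show 2 * s + 2 - 1 = 2 * s + 1 by omega]
    rfl
  · simp only [ncard_range_inter_fiber f hT, hfT]
    rw [card_typeIIPoly_fiber hα ha s (2 * s + k) (by omega), show 2 * s + k - s = s + k by omega]

theorem exists_subspace_typeII_restriction_general (q m r : ℕ) (hq : ∃ e : ℕ, 0 < e ∧ q = 2 ^ e) (hme : Even m)
    (K L : Type) [Field K] [Fintype K] [Field L] [Algebra K L]
    (hcard : Fintype.card K = q)
    (f : QuadraticForm K L)
    (hI : IsTypeI K L m m f)
    (hr1 : 2 ≤ r) (hr2 : r ≤ m / 2) :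
    ∃ W : Submodule K L, Module.finrank K ↥W = m - r ∧
      Module.finrank K ↥W - Module.finrank K ↥(qfKer (f.comp W.subtype)) = m - 2 * r + 2 ∧
      IsTypeII K ↥W (Module.finrank K ↥W) (m - 2 * r + 2) (f.comp W.subtype) ∧
      ∀ a : K, a ≠ 0 →
        Set.ncard {x : L | x ∈ W ∧ f x = a} = q ^ (m - r - 1) + q ^ ((m - 4) / 2) := by
  obtain ⟨e, he, rfl⟩ := hq
  have : CharP K 2 := by
    refine CharTwo.of_one_ne_zero_of_two_eq_zero one_ne_zero ((pow_eq_zero_iff he.ne').mp ?_)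
    exact_mod_cast hcard ▸ FiniteField.cast_card_eq_zero K
  obtain ⟨α, hα⟩ := exists_forall_ne_sq_add_self (K := K)
  obtain ⟨s, k, rfl, rfl⟩ : ∃ s k, m = 2 * (s + k + 2) ∧ r = k + 2 :=
    ⟨m / 2 - r, r - 2, by have := Nat.even_iff.mp hme; omega, by omega⟩
  obtain ⟨W, hdim, hrank, htype, hcount⟩ := exists_typeII_restriction_of_typeI hα s k f hI
  refine ⟨W, by omega, by omega, ?_, fun a ha => ?_⟩
  · convert htype using 2
    omega
  · rw [hcount a ha, hcard]
    congr 2 <;> omega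

/-- For a non-degenerate Type I form `f` on `F_{q^m}` (`m ≥ 4` even) and `2 ≤ r ≤ m/2`, there
is an `(m−r)`-dimensional subspace on which `f` restricts to a Type II form of rank `m−2r+2`;
on it the equation `f(x) = a` (`a ≠ 0`) has `q^(m−r−1) + q^((m−4)/2)` solutions. -/
theorem exists_subspace_typeII_restriction (q m r : ℕ) (hq : ∃ e : ℕ, 0 < e ∧ q = 2 ^ e) (hm : 4 ≤ m) (hme : Even m)
    (K L : Type) [Field K] [Fintype K] [Field L] [Fintype L] [Algebra K L]
    (hcard : Fintype.card K = q) (hcardL : Fintype.card L = q ^ m)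
    (hrank : Module.finrank K L = m)
    (f : QuadraticForm K L)
    (hnd : ∀ x : L, (∀ y, f (x + y) = f y) → x = 0)
    (hI : IsTypeI K L m m f)
    (hr1 : 2 ≤ r) (hr2 : r ≤ m / 2) :
    ∃ W : Submodule K L, Module.finrank K ↥W = m - r ∧
      Module.finrank K ↥W - Module.finrank K ↥(qfKer (f.comp W.subtype)) = m - 2 * r + 2 ∧
      IsTypeII K ↥W (Module.finrank K ↥W) (m - 2 * r + 2) (f.comp W.subtype) ∧
      ∀ a : K, a ≠ 0 →
        Set.ncard {x : L | x ∈ W ∧ f x = a} = q ^ (m - r - 1) + q ^ ((m - 4) / 2) :=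
  exists_subspace_typeII_restriction_general q m r hq hme K L hcard f hI hr1 hr2
end
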